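/- arXiv:1006.5756 — 3 statements merged into one kernel-verified Lean document; each statement's English description precedes it below -/
import Mathlib

section
/- Let u_1, …, u_s ∈ ℤ^n and let C = {∑_{i=1}^{s} t_i u_i : t_i ∈ ℝ, t_i ≥ 0} ⊆ ℝ^n be the rational polyhedral cone they generate. Fix x ∈ ℝ^n and set P := (x + ℤ^n) ∩ relint(C), where relint denotes the relative (intrinsic) interior. Then there is a finite subset S ⊆ P such that every u ∈ P can be written as u = p + χ with p ∈ S and χ ∈ C ∩ ℤ^n; equivalently, P = ⋃_{p ∈ S} (p + (C ∩ ℤ^n)). (This expresses that the R[C ∩ ℤ^n]-module with basis P, on which χ ∈ C ∩ ℤ^n acts by χ·[p] = [p + χ], is finitely generated — the paper's variant of Gordan's lemma.) -/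
/-!
Statement 0: the paper's variant of Gordan's lemma.  Given integer vectors
`u 1, …, u s` generating the rational polyhedral cone `C ⊆ ℝ^n` and a point
`x ∈ ℝ^n`, the set `P = (x + ℤ^n) ∩ relint C` is covered by finitely many
translates `p + (C ∩ ℤ^n)` with `p ∈ P`.
-/

/-- The inclusion of the standard lattice `ℤ^n` into `ℝ^n`. -/
def ivec {n : ℕ} (m : Fin n → ℤ) : Fin n → ℝ := fun j => (m j : ℝ)

/-- The rational polyhedral cone generated by the integer vectors `u i`. -/
def coneOf {n s : ℕ} (u : Fin s → Fin n → ℤ) : Set (Fin n → ℝ) :=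
  {v | ∃ t : Fin s → ℝ, (∀ i, 0 ≤ t i) ∧ v = ∑ i, t i • ivec (u i)}

section aux
variable {n s : ℕ} (u : Fin s → Fin n → ℤ)

def Vspan : Submodule ℝ (Fin n → ℝ) := Submodule.span ℝ (Set.range (fun i => ivec (u i)))

def Lmap : (Fin s → ℝ) →ₗ[ℝ] (Fin n → ℝ) where
  toFun t := ∑ i, t i • ivec (u i)
  map_add' a b := by simp [add_smul, Finset.sum_add_distrib]
  map_smul' c a := by simp [smul_smul, Finset.smul_sum]

lemma Lmap_mem_V (t : Fin s → ℝ) : Lmap u t ∈ Vspan u := by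
  show ∑ i, t i • ivec (u i) ∈ Vspan u
  exact
  Submodule.sum_mem _ fun i _ => Submodule.smul_mem _ _ (Submodule.subset_span (Set.mem_range_self i))

lemma Lmap_single (i : Fin s) : Lmap u (Pi.single i 1) = ivec (u i) := by
  simp [Lmap, Pi.single_apply, ite_smul]

def Lres : (Fin s → ℝ) →ₗ[ℝ] (Vspan u) := (Lmap u).codRestrict (Vspan u) (Lmap_mem_V u)

lemma Lres_surj : Function.Surjective (Lres u) := by
  rintro ⟨v, hv⟩
  induction hv using Submodule.span_induction with
  | mem y hy =>
      obtain ⟨i, rfl⟩ := hy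
      exact ⟨Pi.single i 1, Subtype.ext (Lmap_single u i)⟩
  | zero => exact ⟨0, Subtype.ext (map_zero (Lmap u))⟩
  | add a b ha hb iha ihb =>
      obtain ⟨ta, hta⟩ := iha; obtain ⟨tb, htb⟩ := ihb
      refine ⟨ta + tb, Subtype.ext ?_⟩
      have := congrArg Subtype.val hta
      have := congrArg Subtype.val htb
      simp_all [Lres, map_add]
  | smul c a ha iha =>
      obtain ⟨ta, hta⟩ := iha
      refine ⟨c • ta, Subtype.ext ?_⟩
      have := congrArg Subtype.val hta
      simp_all [Lres, map_smul]

lemma gen_mem_cone (i : Fin s) : ivec (u i) ∈ coneOf u := by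
  refine ⟨Pi.single i 1, fun j => by by_cases h : j = i <;> simp [Pi.single_apply, h], ?_⟩
  simp [Pi.single_apply, ite_smul]

lemma zero_mem_cone : (0 : Fin n → ℝ) ∈ coneOf u :=
  ⟨0, fun _ => le_refl _, by simp⟩

lemma cone_subset_V : coneOf u ⊆ (Vspan u : Set (Fin n → ℝ)) := by
  rintro v ⟨t, ht, rfl⟩
  exact Lmap_mem_V u t

lemma affineSpan_cone_eq :
    (affineSpan ℝ (coneOf u) : Set (Fin n → ℝ)) = (Vspan u : Set (Fin n → ℝ)) := by
  apply Set.Subset.antisymm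
  · have : affineSpan ℝ (coneOf u) ≤ (Vspan u).toAffineSubspace := by
      rw [affineSpan_le]; exact cone_subset_V u
    exact this
  · intro v hv
    have h0 : (0 : Fin n → ℝ) ∈ affineSpan ℝ (coneOf u) :=
      subset_affineSpan ℝ _ (zero_mem_cone u)
    induction hv using Submodule.span_induction with
    | mem y hy => obtain ⟨i, rfl⟩ := hy; exact subset_affineSpan ℝ _ (gen_mem_cone u i)
    | zero => exact h0
    | add a b _ _ ha hb =>
      have := (affineSpan ℝ (coneOf u)).smul_vsub_vadd_mem 1 ha h0 hb
      simpa using this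
    | smul c a _ ha =>
      have := (affineSpan ℝ (coneOf u)).smul_vsub_vadd_mem c ha h0 h0
      simpa using this

/-- A strictly positive combination of the generators lies in the intrinsic interior. -/
lemma pos_mem_intrinsic (t : Fin s → ℝ) (ht : ∀ i, 0 < t i) :
    (∑ i, t i • ivec (u i)) ∈ intrinsicInterior ℝ (coneOf u) := by
  set cL : (Fin s → ℝ) →L[ℝ] (Vspan u) :=
    { toLinearMap := Lres u, cont := (Lres u).continuous_of_finiteDimensional }
  have hopenmap : IsOpenMap cL := cL.isOpenMap (Lres_surj u)
  set U : Set (Fin s → ℝ) := {t | ∀ i, 0 < t i} with hU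
  have hUopen : IsOpen U := by
    have : U = ⋂ i, {t : Fin s → ℝ | 0 < t i} := by ext; simp [hU]
    rw [this]
    exact isOpen_iInter_of_finite fun i => isOpen_lt continuous_const (continuous_apply i)
  have himgopen : IsOpen (cL '' U) := hopenmap U hUopen
  -- transfer to the affine span subtype
  set e : (Vspan u : Set (Fin n → ℝ)) ≃ₜ (affineSpan ℝ (coneOf u) : Set (Fin n → ℝ)) :=
    Homeomorph.setCongr (affineSpan_cone_eq u).symm with he
  have himg2 : IsOpen (e '' (cL '' U)) := e.isOpenMap _ himgopen
  have hsub : e '' (cL '' U) ⊆ ((↑) ⁻¹' coneOf u : Set (affineSpan ℝ (coneOf u))) := by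
    rintro w ⟨v, ⟨a, ha, rfl⟩, rfl⟩
    show ((e (cL a) : (Fin n → ℝ))) ∈ coneOf u
    have : ((e (cL a) : (Fin n → ℝ))) = (cL a : Fin n → ℝ) := by
      simp only [e, Homeomorph.setCongr, Homeomorph.homeomorph_mk_coe, Equiv.setCongr_apply]
    rw [this]
    exact ⟨a, fun i => (ha i).le, rfl⟩
  have hmemA : (∑ i, t i • ivec (u i)) ∈ affineSpan ℝ (coneOf u) := by
    have : (∑ i, t i • ivec (u i)) ∈ (Vspan u : Set (Fin n → ℝ)) := Lmap_mem_V u t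
    rw [← affineSpan_cone_eq u] at this; exact this
  refine ⟨⟨∑ i, t i • ivec (u i), hmemA⟩, ?_, rfl⟩
  apply interior_mono hsub
  rw [himg2.interior_eq]
  refine ⟨cL t, ⟨t, ht, rfl⟩, ?_⟩
  apply Subtype.ext
  simp only [e, Homeomorph.setCongr, Homeomorph.homeomorph_mk_coe, Equiv.setCongr_apply]
  rfl


lemma finite_boxed (x : Fin n → ℝ) :
    {y : Fin n → ℝ | (∃ m : Fin n → ℤ, y = x + ivec m) ∧
      ∃ t : Fin s → ℝ, (∀ i, |t i| ≤ 1) ∧ y = ∑ i, t i • ivec (u i)}.Finite := by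
  classical
  set B : Fin n → ℤ := fun j => ⌈|x j| + ∑ i, |(u i j : ℝ)|⌉ with hB
  have hsub : {y : Fin n → ℝ | (∃ m : Fin n → ℤ, y = x + ivec m) ∧
      ∃ t : Fin s → ℝ, (∀ i, |t i| ≤ 1) ∧ y = ∑ i, t i • ivec (u i)} ⊆
      (fun m : Fin n → ℤ => x + ivec m) '' Set.Icc (-B) B := by
    rintro y ⟨⟨m, rfl⟩, t, ht, hy⟩
    refine ⟨m, ?_, rfl⟩
    have hmj : ∀ j, |(m j : ℝ)| ≤ |x j| + ∑ i, |(u i j : ℝ)| := by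
      intro j
      have hyj : (x j + (m j : ℝ)) = ∑ i, t i * (u i j : ℝ) := by
        have := congrFun hy j
        simpa [ivec] using this
      have h1 : |x j + (m j : ℝ)| ≤ ∑ i, |(u i j : ℝ)| := by
        rw [hyj]
        calc |∑ i, t i * (u i j : ℝ)| ≤ ∑ i, |t i * (u i j : ℝ)| :=
              Finset.abs_sum_le_sum_abs _ _
          _ ≤ ∑ i, |(u i j : ℝ)| := by
              apply Finset.sum_le_sum
              intro i _
              rw [abs_mul]
              calc |t i| * |(u i j : ℝ)| ≤ 1 * |(u i j : ℝ)| := by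
                    apply mul_le_mul_of_nonneg_right (ht i) (abs_nonneg _)
                _ = |(u i j : ℝ)| := one_mul _
      have : |(m j : ℝ)| = |(x j + m j) - x j| := by ring_nf
      rw [this]
      calc |(x j + m j) - x j| ≤ |x j + (m j:ℝ)| + |x j| := abs_sub _ _
        _ ≤ |x j| + ∑ i, |(u i j : ℝ)| := by linarith
    constructor <;> intro j
    · show -B j ≤ m j
      have h2 : -(|x j| + ∑ i, |(u i j : ℝ)|) ≤ (m j : ℝ) := by
        have := (abs_le.1 (hmj j)).1; linarith
      have h3 : ((-B j : ℤ) : ℝ) ≤ (m j : ℝ) := by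
        push_cast
        calc -(B j : ℝ) ≤ -(|x j| + ∑ i, |(u i j : ℝ)|) := by
              simp only [hB, neg_le_neg_iff]; exact Int.le_ceil _
          _ ≤ (m j : ℝ) := h2
      exact_mod_cast h3
    · show m j ≤ B j
      have h2 : (m j : ℝ) ≤ |x j| + ∑ i, |(u i j : ℝ)| := (abs_le.1 (hmj j)).2
      have h3 : (m j : ℝ) ≤ ((B j : ℤ) : ℝ) := le_trans h2 (Int.le_ceil _)
      exact_mod_cast h3
  exact Set.Finite.subset (Set.Finite.image _ (Set.finite_Icc _ _)) hsub


lemma pushout (C : Set (Fin n → ℝ)) (y q : Fin n → ℝ)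
    (hy : y ∈ intrinsicInterior ℝ C) (hq : q ∈ C) :
    ∃ ε : ℝ, 0 < ε ∧ (1 + ε) • y - ε • q ∈ C := by
  obtain ⟨z, hz, rfl⟩ := hy
  have hyA : (z : Fin n → ℝ) ∈ affineSpan ℝ C := z.2
  have hqA : q ∈ affineSpan ℝ C := subset_affineSpan ℝ C hq
  have hmem : ∀ ε : ℝ, (1 + ε) • (z : Fin n → ℝ) - ε • q ∈ affineSpan ℝ C := by
    intro ε
    have := (affineSpan ℝ C).smul_vsub_vadd_mem ε hyA hqA hyA
    have heq : ε • ((z : Fin n → ℝ) -ᵥ q) +ᵥ (z : Fin n → ℝ)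
        = (1 + ε) • (z : Fin n → ℝ) - ε • q := by
      simp only [vsub_eq_sub, vadd_eq_add, smul_sub, add_smul, one_smul]; abel
    rwa [heq] at this
  set f : ℝ → (affineSpan ℝ C : AffineSubspace ℝ (Fin n → ℝ)) :=
    fun ε => ⟨(1 + ε) • (z : Fin n → ℝ) - ε • q, hmem ε⟩ with hf
  have hfc : Continuous f := by
    refine Continuous.subtype_mk ?_ _
    fun_prop
  have hf0 : f 0 = z := by
    apply Subtype.ext; simp [hf]
  have hnhd : f ⁻¹' (interior ((↑) ⁻¹' C : Set (affineSpan ℝ C))) ∈ nhds (0 : ℝ) := by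
    apply hfc.continuousAt.preimage_mem_nhds
    rw [hf0]
    exact isOpen_interior.mem_nhds hz
  obtain ⟨δ, hδ, hball⟩ := Metric.mem_nhds_iff.1 hnhd
  refine ⟨δ/2, by positivity, ?_⟩
  have : f (δ/2) ∈ interior ((↑) ⁻¹' C : Set (affineSpan ℝ C)) := by
    apply hball
    simp only [Metric.mem_ball, Real.dist_eq, sub_zero]
    rw [abs_of_pos (by positivity)]; linarith
  have h2 : f (δ/2) ∈ ((↑) ⁻¹' C : Set (affineSpan ℝ C)) := interior_subset this
  exact h2

lemma cone_rep_of_intrinsic (y : Fin n → ℝ) (hy : y ∈ intrinsicInterior ℝ (coneOf u)) :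
    ∃ t : Fin s → ℝ, (∀ i, 0 < t i) ∧ y = ∑ i, t i • ivec (u i) := by
  have hq : (∑ i, ivec (u i)) ∈ coneOf u := ⟨fun _ => 1, fun _ => zero_le_one, by simp⟩
  obtain ⟨ε, hε, hw⟩ := pushout (coneOf u) y _ hy hq
  obtain ⟨r, hr, hreq⟩ := hw
  have h1ε : (0:ℝ) < 1 + ε := by linarith
  refine ⟨fun i => (r i + ε) / (1 + ε), fun i => div_pos (by linarith [hr i]) h1ε, ?_⟩
  have hy' : (1 + ε) • y = (∑ i, r i • ivec (u i)) + ε • ∑ i, ivec (u i) := by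
    rw [← hreq]; abel
  have : y = (1/(1+ε)) • ((1 + ε) • y) := by
    rw [smul_smul, one_div_mul_cancel (ne_of_gt h1ε), one_smul]
  rw [this, hy', smul_add, Finset.smul_sum, Finset.smul_sum, Finset.smul_sum,
    ← Finset.sum_add_distrib]
  apply Finset.sum_congr rfl
  intro i _
  rw [smul_smul, smul_smul, ← add_smul]
  show (1 / (1 + ε) * r i + 1 / (1 + ε) * ε) • ivec (u i) = ((r i + ε) / (1 + ε)) • ivec (u i)
  congr 1
  field_simp

theorem gordan_variant_aux (hn : 0 < n) (hs : 0 < s) (x : Fin n → ℝ)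
    (P : Set (Fin n → ℝ))
    (hP : P = {y | ∃ m : Fin n → ℤ, y = x + ivec m} ∩
      intrinsicInterior ℝ (coneOf u)) :
    ∃ S : Finset (Fin n → ℝ), ↑S ⊆ P ∧
      ∀ y ∈ P, ∃ p ∈ S, ∃ χ : Fin n → ℤ, ivec χ ∈ coneOf u ∧ y = p + ivec χ := by
  classical
  set S0 : Set (Fin n → ℝ) :=
    {y | y ∈ P ∧ ∃ t : Fin s → ℝ, (∀ i, 0 < t i ∧ t i ≤ 1) ∧ y = ∑ i, t i • ivec (u i)}
    with hS0
  have hfin : S0.Finite := by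
    apply (finite_boxed u x).subset
    rintro y ⟨hyP, t, ht, hyt⟩
    rw [hP] at hyP
    exact ⟨hyP.1, t, fun i => abs_le.2 ⟨by linarith [(ht i).1], (ht i).2⟩, hyt⟩
  refine ⟨hfin.toFinset, ?_, ?_⟩
  · intro p hp
    simp only [Finset.mem_coe, Set.Finite.mem_toFinset] at hp
    exact hp.1
  · intro y hy
    have hy' := hy
    rw [hP] at hy'
    obtain ⟨⟨m, hm⟩, hrel⟩ := hy'
    obtain ⟨t, htpos, hyt⟩ := cone_rep_of_intrinsic u y hrel
    set k : Fin s → ℤ := fun i => ⌈t i⌉ - 1 with hk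
    have hk0 : ∀ i, 0 ≤ k i := by
      intro i
      have : 0 < ⌈t i⌉ := Int.ceil_pos.2 (htpos i)
      simp only [hk]; omega
    have ha : ∀ i, 0 < t i - (k i : ℝ) ∧ t i - (k i : ℝ) ≤ 1 := by
      intro i
      have h1 : (⌈t i⌉ : ℝ) < t i + 1 := Int.ceil_lt_add_one _
      have h2 : t i ≤ (⌈t i⌉ : ℝ) := Int.le_ceil _
      constructor <;> · simp only [hk]; push_cast; linarith
    set χ : Fin n → ℤ := fun j => ∑ i, k i * u i j with hχ
    have hχeq : ivec χ = ∑ i, (k i : ℝ) • ivec (u i) := by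
      funext j
      simp only [ivec, hχ, Finset.sum_apply, Pi.smul_apply, smul_eq_mul]
      push_cast
      rfl
    set p : Fin n → ℝ := ∑ i, (t i - (k i : ℝ)) • ivec (u i) with hp
    have hyp : y = p + ivec χ := by
      rw [hyt, hp, hχeq, ← Finset.sum_add_distrib]
      apply Finset.sum_congr rfl
      intro i _
      rw [← add_smul]
      congr 1
      ring
    have hpP : p ∈ P := by
      rw [hP]
      constructor
      · refine ⟨m - χ, ?_⟩
        have : p = y - ivec χ := by rw [hyp]; abel
        rw [this, hm]
        funext j
        simp only [ivec, Pi.add_apply, Pi.sub_apply]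
        push_cast
        ring
      · exact pos_mem_intrinsic u _ (fun i => (ha i).1)
    refine ⟨p, ?_, χ, ?_, hyp⟩
    · rw [Set.Finite.mem_toFinset]
      exact ⟨hpP, fun i => t i - (k i : ℝ), ha, rfl⟩
    · rw [hχeq]
      exact ⟨fun i => (k i : ℝ), fun i => by show (0:ℝ) ≤ (k i : ℝ); exact_mod_cast hk0 i, rfl⟩

end aux

theorem gordan_variant (n s : ℕ) (hn : 0 < n) (hs : 0 < s)
    (u : Fin s → Fin n → ℤ) (x : Fin n → ℝ)
    (P : Set (Fin n → ℝ))
    (hP : P = {y | ∃ m : Fin n → ℤ, y = x + ivec m} ∩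
      intrinsicInterior ℝ (coneOf u)) :
    ∃ S : Finset (Fin n → ℝ), ↑S ⊆ P ∧
      ∀ y ∈ P, ∃ p ∈ S, ∃ χ : Fin n → ℤ, ivec χ ∈ coneOf u ∧ y = p + ivec χ :=
  gordan_variant_aux u hn hs x P hP
end

section
/- Let u_1, …, u_s ∈ ℤ^n, let C = {∑_{i=1}^{s} t_i u_i : t_i ∈ ℝ, t_i ≥ 0} ⊆ ℝ^n be the rational polyhedral cone they generate, and let L := C ∩ (−C) be its lineality space. Then there exists an additive subgroup Γ ≤ ℤ^n such that ℤ^n is the internal direct sum of L ∩ ℤ^n and Γ, and for any such Γ the addition map (L ∩ ℤ^n) × (C ∩ Γ) → C ∩ ℤ^n, (l, γ) ↦ l + γ, is an isomorphism of additive monoids. (This is the splitting underlying the statement that R[σ^∨ ∩ M] is the tensor product of R[σ^⊥ ∩ M] and the monoid algebra of the image of σ^∨ ∩ M in the quotient lattice.) -/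
lemma ivec_zero {n : ℕ} : ivec (0 : Fin n → ℤ) = 0 := by
  funext j; simp [ivec]

lemma ivec_add {n : ℕ} (a b : Fin n → ℤ) : ivec (a + b) = ivec a + ivec b := by
  funext j; simp [ivec]

lemma ivec_neg {n : ℕ} (a : Fin n → ℤ) : ivec (-a) = -ivec a := by
  funext j; simp [ivec]

lemma coneOf_zero {n s : ℕ} (u : Fin s → Fin n → ℤ) : (0 : Fin n → ℝ) ∈ coneOf u :=
  ⟨0, fun _ => le_rfl, by simp⟩

lemma coneOf_add {n s : ℕ} (u : Fin s → Fin n → ℤ) {v w : Fin n → ℝ}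
    (hv : v ∈ coneOf u) (hw : w ∈ coneOf u) : v + w ∈ coneOf u := by
  obtain ⟨t, ht, rfl⟩ := hv
  obtain ⟨r, hr, rfl⟩ := hw
  exact ⟨t + r, fun i => add_nonneg (ht i) (hr i), by
    simp [add_smul, Finset.sum_add_distrib]⟩

/-- The lattice points of the cone, `C ∩ ℤ^n`, as an additive monoid. -/
def coneLattice {n s : ℕ} (u : Fin s → Fin n → ℤ) : AddSubmonoid (Fin n → ℤ) where
  carrier := {m | ivec m ∈ coneOf u}
  zero_mem' := by simpa [ivec_zero] using coneOf_zero u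
  add_mem' := by
    intro a b ha hb
    show ivec (a + b) ∈ coneOf u
    rw [ivec_add]
    exact coneOf_add u ha hb

/-- The lattice points of the lineality space `L = C ∩ (-C)`, i.e. `L ∩ ℤ^n`,
as an additive group. -/
def linealityLattice {n s : ℕ} (u : Fin s → Fin n → ℤ) : AddSubgroup (Fin n → ℤ) where
  carrier := {m | ivec m ∈ coneOf u ∧ -ivec m ∈ coneOf u}
  zero_mem' := by
    constructor <;> simpa [ivec_zero] using coneOf_zero u
  add_mem' := by
    intro a b ha hb
    constructor
    · rw [ivec_add]; exact coneOf_add u ha.1 hb.1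
    · rw [ivec_add, neg_add]; exact coneOf_add u ha.2 hb.2
  neg_mem' := by
    intro a ha
    constructor
    · rw [ivec_neg]; exact ha.2
    · rw [ivec_neg, neg_neg]; exact ha.1


lemma coneOf_smul {n s : ℕ} (u : Fin s → Fin n → ℤ) {c : ℝ} (hc : 0 ≤ c)
    {v : Fin n → ℝ} (hv : v ∈ coneOf u) : c • v ∈ coneOf u := by
  obtain ⟨t, ht, rfl⟩ := hv
  exact ⟨c • t, fun i => mul_nonneg hc (ht i), by
    simp [Finset.smul_sum, smul_smul]⟩

lemma lineality_sat {n s : ℕ} (u : Fin s → Fin n → ℤ) {k : ℤ} (hk : k ≠ 0)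
    {m : Fin n → ℤ} (h : k • m ∈ linealityLattice u) : m ∈ linealityLattice u := by
  -- reduce to k > 0
  rcases lt_or_gt_of_ne hk with hneg | hpos
  · have : (-k) • m ∈ linealityLattice u := by
      rw [neg_smul]; exact (linealityLattice u).neg_mem h
    have hk' : (0:ℤ) < -k := by omega
    -- redo the positive case with -k
    obtain ⟨h1, h2⟩ := this
    have hivec : ivec ((-k) • m) = ((-k : ℤ) : ℝ) • ivec m := by
      funext j; simp [ivec, Pi.smul_apply, mul_comm]
    have hcpos : (0:ℝ) < ((-k : ℤ) : ℝ) := by exact_mod_cast hk'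
    have hinv : (0:ℝ) ≤ (((-k : ℤ) : ℝ))⁻¹ := le_of_lt (inv_pos.mpr hcpos)
    constructor
    · have := coneOf_smul u hinv h1
      rwa [hivec, smul_smul, inv_mul_cancel₀ (ne_of_gt hcpos), one_smul] at this
    · have := coneOf_smul u hinv h2
      rwa [hivec, ← smul_neg, smul_smul, inv_mul_cancel₀ (ne_of_gt hcpos), one_smul] at this
  · obtain ⟨h1, h2⟩ := h
    have hivec : ivec (k • m) = ((k : ℤ) : ℝ) • ivec m := by
      funext j; simp [ivec, Pi.smul_apply, mul_comm]
    have hcpos : (0:ℝ) < ((k : ℤ) : ℝ) := by exact_mod_cast hpos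
    have hinv : (0:ℝ) ≤ (((k : ℤ) : ℝ))⁻¹ := le_of_lt (inv_pos.mpr hcpos)
    constructor
    · have := coneOf_smul u hinv h1
      rwa [hivec, smul_smul, inv_mul_cancel₀ (ne_of_gt hcpos), one_smul] at this
    · have := coneOf_smul u hinv h2
      rwa [hivec, ← smul_neg, smul_smul, inv_mul_cancel₀ (ne_of_gt hcpos), one_smul] at this

lemma exists_complement {n s : ℕ} (u : Fin s → Fin n → ℤ) :
    ∃ Γ : AddSubgroup (Fin n → ℤ),
      (∀ m ∈ linealityLattice u, m ∈ Γ → m = 0) ∧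
      (∀ m : Fin n → ℤ, ∃ l ∈ linealityLattice u, ∃ γ ∈ Γ, m = l + γ) := by
  set H : Submodule ℤ (Fin n → ℤ) := (linealityLattice u).toIntSubmodule with hH
  haveI : NoZeroSMulDivisors ℤ ((Fin n → ℤ) ⧸ H) := by
    constructor
    intro c x hcx
    by_cases hc : c = 0
    · exact Or.inl hc
    · right
      obtain ⟨m, rfl⟩ := Submodule.Quotient.mk_surjective H x
      rw [← Submodule.Quotient.mk_smul, Submodule.Quotient.mk_eq_zero] at hcx
      rw [Submodule.Quotient.mk_eq_zero]
      exact lineality_sat u hc hcx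
  haveI : Module.Free ℤ ((Fin n → ℤ) ⧸ H) := Module.free_of_finite_type_torsion_free'
  obtain ⟨g, hg⟩ := Module.projective_lifting_property H.mkQ LinearMap.id
    (Submodule.mkQ_surjective H)
  refine ⟨(LinearMap.range g).toAddSubgroup, ?_, ?_⟩
  · intro m hm hmg
    obtain ⟨y, rfl⟩ := hmg
    have : H.mkQ (g y) = y := congrArg (· y) hg
    have hy : y = 0 := by
      rw [← this, Submodule.mkQ_apply, Submodule.Quotient.mk_eq_zero]
      exact hm
    rw [hy, map_zero]
  · intro m
    refine ⟨m - g (H.mkQ m), ?_, g (H.mkQ m), ⟨H.mkQ m, rfl⟩, by ring⟩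
    have : H.mkQ (m - g (H.mkQ m)) = 0 := by
      rw [map_sub]
      have : H.mkQ (g (H.mkQ m)) = H.mkQ m := congrArg (· (H.mkQ m)) hg
      rw [this, sub_self]
    rw [Submodule.mkQ_apply, Submodule.Quotient.mk_eq_zero] at this
    exact this

theorem lattice_splitting (n s : ℕ) (hn : 0 < n) (hs : 0 < s)
    (u : Fin s → Fin n → ℤ) :
    (∃ Γ : AddSubgroup (Fin n → ℤ),
      (∀ m ∈ linealityLattice u, m ∈ Γ → m = 0) ∧
      (∀ m : Fin n → ℤ, ∃ l ∈ linealityLattice u, ∃ γ ∈ Γ, m = l + γ)) ∧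
    (∀ Γ : AddSubgroup (Fin n → ℤ),
      (∀ m ∈ linealityLattice u, m ∈ Γ → m = 0) →
      (∀ m : Fin n → ℤ, ∃ l ∈ linealityLattice u, ∃ γ ∈ Γ, m = l + γ) →
      ∃ e : (↥(linealityLattice u) × ↥(Γ.toAddSubmonoid ⊓ coneLattice u)) ≃+
          ↥(coneLattice u),
        ∀ p : ↥(linealityLattice u) × ↥(Γ.toAddSubmonoid ⊓ coneLattice u),
          (e p : Fin n → ℤ) = (p.1 : Fin n → ℤ) + (p.2 : Fin n → ℤ)) := by
  constructor
  · exact exists_complement u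
  · intro Γ htriv hgen
    have memCL : ∀ (p : ↥(linealityLattice u) × ↥(Γ.toAddSubmonoid ⊓ coneLattice u)),
        ((p.1 : Fin n → ℤ) + (p.2 : Fin n → ℤ)) ∈ coneLattice u := by
      intro p
      have h1 : ivec (p.1 : Fin n → ℤ) ∈ coneOf u := p.1.2.1
      have h2 : ivec (p.2 : Fin n → ℤ) ∈ coneOf u := p.2.2.2
      show ivec _ ∈ coneOf u
      rw [ivec_add]
      exact coneOf_add u h1 h2
    let f : (↥(linealityLattice u) × ↥(Γ.toAddSubmonoid ⊓ coneLattice u)) →+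
        ↥(coneLattice u) :=
      { toFun := fun p => ⟨(p.1 : Fin n → ℤ) + (p.2 : Fin n → ℤ), memCL p⟩
        map_zero' := by simp
        map_add' := by
          intro p q
          ext j
          simp only [Prod.fst_add, Prod.snd_add, AddSubmonoid.coe_add,
            AddSubgroup.coe_add, AddSubmonoid.coe_add, Pi.add_apply]
          ring }
    have hinj : Function.Injective f := by
      intro p q hpq
      have h : (p.1 : Fin n → ℤ) + (p.2 : Fin n → ℤ)
          = (q.1 : Fin n → ℤ) + (q.2 : Fin n → ℤ) := congrArg Subtype.val hpq
      have hmemL : ((p.1 : Fin n → ℤ) - (q.1 : Fin n → ℤ)) ∈ linealityLattice u :=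
        (linealityLattice u).sub_mem p.1.2 q.1.2
      have hmemG : ((p.1 : Fin n → ℤ) - (q.1 : Fin n → ℤ)) ∈ Γ := by
        have : (p.1 : Fin n → ℤ) - (q.1 : Fin n → ℤ)
            = (q.2 : Fin n → ℤ) - (p.2 : Fin n → ℤ) := by
          have := h; abel_nf at this ⊢; linear_combination (norm := module) this
        rw [this]
        exact Γ.sub_mem q.2.2.1 p.2.2.1
      have hz := htriv _ hmemL hmemG
      have h1 : (p.1 : Fin n → ℤ) = (q.1 : Fin n → ℤ) := by
        have := sub_eq_zero.mp hz; exact this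
      have h2 : (p.2 : Fin n → ℤ) = (q.2 : Fin n → ℤ) := by
        have := h; rw [h1] at this; exact add_left_cancel this
      exact Prod.ext (Subtype.ext h1) (Subtype.ext h2)
    have hsurj : Function.Surjective f := by
      rintro ⟨m, hm⟩
      obtain ⟨l, hl, γ, hγ, hmlγ⟩ := hgen m
      have hγC : γ ∈ coneLattice u := by
        have : γ = m + (-l) := by rw [hmlγ]; ring
        show ivec γ ∈ coneOf u
        rw [this, ivec_add, ivec_neg]
        exact coneOf_add u hm hl.2
      exact ⟨⟨⟨l, hl⟩, ⟨γ, ⟨hγ, hγC⟩⟩⟩, Subtype.ext hmlγ.symm⟩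
    refine ⟨AddEquiv.ofBijective f ⟨hinj, hsurj⟩, fun p => rfl⟩
end

section
/- Let x_1, …, x_r ∈ ℤ^n be vectors whose ℝ-linear span is all of ℝ^n, and suppose that every n-element linearly independent subset of {x_1, …, x_r} is a ℤ-basis of ℤ^n (the unimodularity condition). Then for every linearly independent subset {x_{j_1}, …, x_{j_i}} ⊆ {x_1, …, x_r}, the vectors x_{j_1}, …, x_{j_i} form a ℤ-basis of the subgroup span_ℝ{x_{j_1}, …, x_{j_i}} ∩ ℤ^n. -/
open Module Submodule Set

section LinearIndependent

variable {R M ι : Type*} [Semiring R] [AddCommMonoid M] [Module R M] [Fintype ι] {v : ι → M}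

theorem LinearIndependent.existsUnique_eq_sum_smul (hv : LinearIndependent R v) {m : M}
    (hm : m ∈ span R (range v)) : ∃! c : ι → R, m = ∑ i, c i • v i := by
  obtain ⟨c, rfl⟩ := (mem_span_range_iff_exists_fun R).mp hm
  exact ⟨c, rfl, fun c' hc' => funext (Fintype.linearIndependent_iffₛ.mp hv c' c hc'.symm)⟩

theorem LinearIndependent.eq_zero_of_sum_smul_mem_span_image (hv : LinearIndependent R v)
    {c : ι → R} {s : Set ι} (hc : ∑ i, c i • v i ∈ span R (v '' s)) {i : ι} (hi : i ∉ s) :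
    c i = 0 := by
  obtain ⟨l, hl, hlc⟩ := (Finsupp.mem_span_image_iff_linearCombination R).mp hc
  have hcl : Finsupp.equivFunOnFinite.symm c = l := hv <| by
    rw [hlc, Finsupp.linearCombination_apply, Finsupp.sum_fintype _ _ fun i => zero_smul R (v i)]
    rfl
  subst hcl
  simpa using Finsupp.notMem_support_iff.mp fun h => hi (hl h)

end LinearIndependent

theorem LinearIndepOn.exists_fin_extension {K V ι : Type*} [DivisionRing K] [AddCommGroup V]
    [Module K V] [FiniteDimensional K V] {v : ι → V} {s : Set ι} (hs : LinearIndepOn K v s)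
    {d : ℕ} (hd : finrank K V = d) (hv : span K (range v) = ⊤) :
    ∃ h : Fin d → ι, LinearIndependent K (v ∘ h) ∧ s ⊆ range h := by
  obtain ⟨b, -, hsb, hvb, hb⟩ := exists_linearIndepOn_extension hs (subset_univ s)
  have hspan : span K (range fun i : b => v i) = ⊤ := by
    rw [eq_top_iff, ← hv, ← image_univ, ← image_eq_range]
    exact span_le.mpr hvb
  let B : Basis b K V := .mk hb hspan.ge
  have : Finite b := Module.Finite.finite_basis B
  let e : Fin d ≃ b := (finCongr (hd ▸ finrank_eq_nat_card_basis B)).trans (Finite.equivFin b).symm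
  refine ⟨Subtype.val ∘ e, hb.comp e e.injective, ?_⟩
  rwa [range_comp, e.range_eq_univ, image_univ, Subtype.range_coe]

def ivecLinearMap (n : ℕ) : (Fin n → ℤ) →ₗ[ℤ] Fin n → ℝ :=
  (Algebra.linearMap ℤ ℝ).compLeft (Fin n)

theorem ivecLinearMap_apply {n : ℕ} (m : Fin n → ℤ) : ivecLinearMap n m = ivec m := rfl

theorem ivec_sum_smul {n : ℕ} {ι : Type*} [Fintype ι] (c : ι → ℤ) (w : ι → Fin n → ℤ) :
    ivec (∑ i, c i • w i) = ∑ i, (c i : ℝ) • ivec (w i) := by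
  simp only [← ivecLinearMap_apply, map_sum, map_zsmul, Int.cast_smul_eq_zsmul]

theorem LinearIndependent.of_ivec {n : ℕ} {ι : Type*} {w : ι → Fin n → ℤ}
    (hw : LinearIndependent ℝ fun i => ivec (w i)) : LinearIndependent ℤ w :=
  .of_comp (ivecLinearMap n) (hw.restrict_scalars' ℤ)

theorem sum_smul_mem_span_int_of_ivec_mem_span {n : ℕ} {ι : Type*} [Fintype ι]
    {w : ι → Fin n → ℤ} (hw : LinearIndependent ℝ fun i => ivec (w i)) {c : ι → ℤ} {s : Set ι}
    (hc : ivec (∑ i, c i • w i) ∈ span ℝ ((fun i => ivec (w i)) '' s)) :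
    ∑ i, c i • w i ∈ span ℤ (w '' s) := by
  refine sum_mem fun i _ => ?_
  by_cases hi : i ∈ s
  · exact smul_mem _ _ (subset_span (mem_image_of_mem w hi))
  · rw [ivec_sum_smul] at hc
    rw [Int.cast_eq_zero.mp (hw.eq_zero_of_sum_smul_mem_span_image hc hi), zero_smul]
    exact zero_mem _

theorem unimodular_sub_bases_general (n r : ℕ)
    (x : Fin r → Fin n → ℤ)
    (hspan : Submodule.span ℝ (Set.range fun i => ivec (x i)) = ⊤)
    (huni : ∀ g : Fin n → Fin r,
      LinearIndependent ℝ (fun i => ivec (x (g i))) →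
      ∀ m : Fin n → ℤ, ∃! c : Fin n → ℤ, m = ∑ i, c i • x (g i)) :
    ∀ (k : ℕ) (g : Fin k → Fin r),
      LinearIndependent ℝ (fun i => ivec (x (g i))) →
      ∀ m : Fin n → ℤ,
        ivec m ∈ Submodule.span ℝ (Set.range fun i => ivec (x (g i))) →
        ∃! c : Fin k → ℤ, m = ∑ i, c i • x (g i) := by
  intro k g hg m hm
  refine hg.of_ivec.existsUnique_eq_sum_smul ?_
  have hgOn : LinearIndepOn ℝ (fun i => ivec (x i)) (range g) :=
    (linearIndepOn_range_iff (hg.injective.of_comp (f := fun i => ivec (x i))) _).mpr hg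
  obtain ⟨h, hh, hgh⟩ := hgOn.exists_fin_extension (finrank_fin_fun ℝ) hspan
  have himage {β : Type} (f : Fin r → β) :
      (fun i => f (h i)) '' (h ⁻¹' range g) = range fun j => f (g j) := by
    rw [← Function.comp_def, image_comp, image_preimage_eq_of_subset hgh, ← range_comp,
      Function.comp_def]
  obtain ⟨c, rfl, -⟩ := huni h hh m
  rw [← himage x]
  rw [← himage fun i => ivec (x i)] at hm
  exact sum_smul_mem_span_int_of_ivec_mem_span hh hm

theorem unimodular_sub_bases (n r : ℕ) (hn : 0 < n) (hr : n ≤ r)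
    (x : Fin r → Fin n → ℤ)
    (hspan : Submodule.span ℝ (Set.range fun i => ivec (x i)) = ⊤)
    (huni : ∀ g : Fin n → Fin r,
      LinearIndependent ℝ (fun i => ivec (x (g i))) →
      ∀ m : Fin n → ℤ, ∃! c : Fin n → ℤ, m = ∑ i, c i • x (g i)) :
    ∀ (k : ℕ) (g : Fin k → Fin r),
      LinearIndependent ℝ (fun i => ivec (x (g i))) →
      ∀ m : Fin n → ℤ,
        ivec m ∈ Submodule.span ℝ (Set.range fun i => ivec (x (g i))) →
        ∃! c : Fin k → ℤ, m = ∑ i, c i • x (g i) :=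
  unimodular_sub_bases_general n r x hspan huni
end
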